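/- arXiv:0903.1478 — 5 statements merged into one kernel-verified Lean document; each statement's English description precedes it below -/
import Mathlib

section
/- Let Λ(ξ) be a nonzero polynomial in one variable over ℂ, and let P(z) be a formal power series in ℂ[[z]] such that Λ(d/dz)^m applied to P^m equals 0 for every m ≥ 1. Then P(z) is a polynomial. -/
open PowerSeries

/-- The derivative `d/dz` as a `ℂ`-linear endomorphism of `ℂ[[z]]`. -/
noncomputable def Dz : Module.End ℂ (PowerSeries ℂ) :=
  (PowerSeries.derivative ℂ).toLinearMap

namespace VanishingAux

/-- `e^{az}` as a formal power series. -/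
noncomputable def Ee (a : ℂ) : PowerSeries ℂ := rescale a (exp ℂ)

lemma Ee_mul (a b : ℂ) : Ee a * Ee b = Ee (a + b) := exp_mul_exp_eq_exp_add a b

lemma Ee_zero : Ee 0 = 1 := by
  simp [Ee, rescale_zero]

lemma Ee_ne_zero (a : ℂ) : Ee a ≠ 0 := by
  intro h
  have h2 : Ee a * Ee (-a) = 1 := by rw [Ee_mul]; simp [Ee_zero]
  rw [h, zero_mul] at h2
  exact zero_ne_one h2

lemma Dz_mul (x y : PowerSeries ℂ) : Dz (x * y) = x * Dz y + y * Dz x := by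
  show (PowerSeries.derivative ℂ) (x*y) = _
  rw [Derivation.leibniz]
  simp only [smul_eq_mul, Dz, Derivation.coeFn_coe]

lemma Dz_Ee (a : ℂ) : Dz (Ee a) = a • Ee a := by
  ext n
  simp only [Dz, Derivation.coeFn_coe, PowerSeries.coeff_derivative, Ee, coeff_rescale,
    coeff_exp, map_smul, smul_eq_mul]
  have h1 : ((algebraMap ℚ ℂ) (1 / (n + 1).factorial)) * (↑n + 1)
      = (algebraMap ℚ ℂ) (1 / n.factorial) := by
    have : ((n:ℂ) + 1) = (algebraMap ℚ ℂ) ((n:ℚ)+1) := by push_cast; ring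
    rw [this, ← map_mul]
    congr 1
    rw [Nat.factorial_succ]
    have h2 : ((n:ℚ)+1) ≠ 0 := by positivity
    have h3 : ((n.factorial :ℚ)) ≠ 0 := by exact_mod_cast n.factorial_ne_zero
    field_simp
    push_cast; ring
  rw [mul_assoc, h1, pow_succ]; ring

lemma Dz_coe (p : Polynomial ℂ) :
    Dz (p : PowerSeries ℂ) = ((Polynomial.derivative p : Polynomial ℂ) : PowerSeries ℂ) :=
  PowerSeries.derivative_coe p

/-- The operator `D + a` on polynomials. -/
noncomputable def T (a : ℂ) : Module.End ℂ (Polynomial ℂ) :=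
  (Polynomial.derivative : Polynomial ℂ →ₗ[ℂ] Polynomial ℂ) + a • (1 : Module.End ℂ (Polynomial ℂ))

lemma T_apply (a : ℂ) (q : Polynomial ℂ) :
    T a q = Polynomial.derivative q + a • q := by
  simp [T]

lemma coe_smul (c : ℂ) (q : Polynomial ℂ) :
    ((c • q : Polynomial ℂ) : PowerSeries ℂ) = c • (q : PowerSeries ℂ) := by
  rw [Polynomial.smul_eq_C_mul, Polynomial.coe_mul, Polynomial.coe_C, PowerSeries.smul_eq_C_mul]

lemma T_zero_eq : T 0 = (Polynomial.derivative : Polynomial ℂ →ₗ[ℂ] Polynomial ℂ) := by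
  refine LinearMap.ext fun q => ?_
  rw [T_apply]; simp

/-- Product rule specialized to `q * e^{az}`. -/
lemma Dz_poly_mul_Ee (q : Polynomial ℂ) (a : ℂ) :
    Dz ((q : PowerSeries ℂ) * Ee a) = ((T a q : Polynomial ℂ) : PowerSeries ℂ) * Ee a := by
  rw [Dz_mul, Dz_Ee, Dz_coe, T_apply, Polynomial.coe_add]
  rw [coe_smul, mul_smul_comm, add_mul, smul_mul_assoc, mul_comm (Ee a), add_comm]

lemma Dz_pow_poly_mul_Ee (n : ℕ) (q : Polynomial ℂ) (a : ℂ) :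
    (Dz ^ n) ((q : PowerSeries ℂ) * Ee a) = (((T a ^ n) q : Polynomial ℂ) : PowerSeries ℂ) * Ee a := by
  induction n generalizing q with
  | zero => simp
  | succ n ih =>
    rw [pow_succ, Module.End.mul_apply, Dz_poly_mul_Ee, ih, pow_succ, Module.End.mul_apply]

/-- The key intertwining identity: `Λ(D) (q e^{az}) = (Λ(D + a) q) e^{az}`. -/
lemma aeval_Dz_poly_mul_Ee (Λ : Polynomial ℂ) (q : Polynomial ℂ) (a : ℂ) :
    (Polynomial.aeval Dz Λ) ((q : PowerSeries ℂ) * Ee a)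
      = (((Polynomial.aeval (T a) Λ) q : Polynomial ℂ) : PowerSeries ℂ) * Ee a := by
  induction Λ using Polynomial.induction_on' with
  | add f g hf hg =>
    simp only [map_add, LinearMap.add_apply, hf, hg, Polynomial.coe_add, add_mul]
  | monomial n c =>
    simp only [Polynomial.aeval_monomial, Module.End.mul_apply]
    rw [Dz_pow_poly_mul_Ee,
      Module.algebraMap_end_apply, Module.algebraMap_end_apply, coe_smul, smul_mul_assoc]

noncomputable abbrev DL : Module.End ℂ (Polynomial ℂ) :=
  (Polynomial.derivative : Polynomial ℂ →ₗ[ℂ] Polynomial ℂ)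

lemma T_eq_aeval (a : ℂ) : T a = Polynomial.aeval DL (Polynomial.X + Polynomial.C a) := by
  rw [map_add, Polynomial.aeval_X, Polynomial.aeval_C, T]
  congr 1

/-- If the operator `Μ(D)` on polynomials has nonzero "constant term", it is injective. -/
lemma aeval_DL_inj (Μ : Polynomial ℂ) (h0 : Μ.coeff 0 ≠ 0) {q : Polynomial ℂ}
    (hq : (Polynomial.aeval DL Μ) q = 0) : q = 0 := by
  by_contra hqne
  have hsum : (Polynomial.aeval DL Μ) q
      = ∑ i ∈ Finset.range (Μ.natDegree + 1), Μ.coeff i • ((DL ^ i) q) := by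
    rw [Polynomial.aeval_eq_sum_range]
    simp [LinearMap.sum_apply, LinearMap.smul_apply]
  have hcoeff : Polynomial.coeff ((Polynomial.aeval DL Μ) q) q.natDegree
      = Μ.coeff 0 * q.coeff q.natDegree := by
    rw [hsum]
    rw [Polynomial.finset_sum_coeff]
    rw [Finset.sum_eq_single 0]
    · simp
    · intro i hi hne
      rw [Polynomial.coeff_smul, Module.End.pow_apply, Polynomial.coeff_iterate_derivative]
      have : q.coeff (q.natDegree + i) = 0 := by
        apply Polynomial.coeff_eq_zero_of_natDegree_lt
        omega
      simp [this]
    · intro hmem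
      simp at hmem
  rw [hq] at hcoeff
  simp only [Polynomial.coeff_zero] at hcoeff
  have : q.coeff q.natDegree ≠ 0 := Polynomial.leadingCoeff_ne_zero.mpr hqne
  exact this (by
    rcases mul_eq_zero.mp hcoeff.symm with h | h
    · exact absurd h h0
    · exact h)

lemma T_pow_inj (b : ℂ) (hb : b ≠ 0) (k : ℕ) {q : Polynomial ℂ}
    (hq : (T b ^ k) q = 0) : q = 0 := by
  have : T b ^ k = Polynomial.aeval DL ((Polynomial.X + Polynomial.C b) ^ k) := by
    rw [map_pow, T_eq_aeval]
  rw [this] at hq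
  refine aeval_DL_inj _ ?_ hq
  rw [Polynomial.coeff_zero_eq_eval_zero]
  simp [hb]

/-- Every polynomial has a polynomial antiderivative. -/
lemma deriv_surj (q : Polynomial ℂ) : ∃ r : Polynomial ℂ, Polynomial.derivative r = q := by
  induction q using Polynomial.induction_on' with
  | add f g hf hg =>
    obtain ⟨rf, hrf⟩ := hf; obtain ⟨rg, hrg⟩ := hg
    exact ⟨rf + rg, by rw [map_add, hrf, hrg]⟩
  | monomial n c =>
    refine ⟨Polynomial.C (c / (n+1)) * Polynomial.X ^ (n+1), ?_⟩
    rw [Polynomial.derivative_C_mul, Polynomial.derivative_X_pow, Nat.add_sub_cancel,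
      ← mul_assoc, ← Polynomial.C_mul]
    have hcast : ((n+1:ℕ):ℂ) = (n:ℂ)+1 := by push_cast; ring
    rw [hcast, div_mul_cancel₀ c (Nat.cast_add_one_ne_zero n),
      Polynomial.C_mul_X_pow_eq_monomial]

/-- `T a` is surjective on polynomials. -/
lemma T_surj (a : ℂ) (q : Polynomial ℂ) : ∃ r : Polynomial ℂ, T a r = q := by
  rcases eq_or_ne a 0 with rfl | ha
  · obtain ⟨r, hr⟩ := deriv_surj q
    exact ⟨r, by rw [T_apply, hr]; simp⟩
  · set N := q.natDegree
    set f : ℕ → Polynomial ℂ := fun k => ((-1:ℂ)^k / a^k) • Polynomial.derivative^[k] q with hf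
    refine ⟨∑ k ∈ Finset.range (N+1), ((-1:ℂ)^k / a^(k+1)) • Polynomial.derivative^[k] q, ?_⟩
    rw [T_apply]
    have hder : Polynomial.derivative (∑ k ∈ Finset.range (N+1),
        ((-1:ℂ)^k / a^(k+1)) • Polynomial.derivative^[k] q)
        = ∑ k ∈ Finset.range (N+1), (-(1:ℂ)) • (((-1:ℂ)^(k+1) / a^(k+1)) • Polynomial.derivative^[k+1] q) := by
      rw [map_sum]
      refine Finset.sum_congr rfl fun k _ => ?_
      rw [Polynomial.derivative_smul, smul_smul, Function.iterate_succ_apply']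
      congr 1
      rw [pow_succ]
      field_simp
      ring
    have hsm : a • ∑ k ∈ Finset.range (N+1), ((-1:ℂ)^k / a^(k+1)) • Polynomial.derivative^[k] q
        = ∑ k ∈ Finset.range (N+1), f k := by
      rw [Finset.smul_sum]
      refine Finset.sum_congr rfl fun k _ => ?_
      rw [smul_smul, hf]
      congr 1
      rw [pow_succ]
      field_simp
    rw [hder, hsm]
    have : ∑ k ∈ Finset.range (N+1), (-(1:ℂ)) • (((-1:ℂ)^(k+1) / a^(k+1)) • Polynomial.derivative^[k+1] q)
        = ∑ k ∈ Finset.range (N+1), -(f (k+1)) := by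
      refine Finset.sum_congr rfl fun k _ => ?_
      rw [hf, neg_one_smul, neg_inj]
    rw [this, ← Finset.sum_add_distrib]
    have : ∑ k ∈ Finset.range (N+1), (-(f (k+1)) + f k)
        = ∑ k ∈ Finset.range (N+1), (f k - f (k+1)) := by
      refine Finset.sum_congr rfl fun k _ => by ring
    rw [this, Finset.sum_range_sub' f (N+1), hf]
    have hz : Polynomial.derivative^[N+1] q = 0 :=
      Polynomial.iterate_derivative_eq_zero (by omega)
    simp [hz]

/-- The kernel of `Dz` consists of constants. -/
lemma Dz_ker {x : PowerSeries ℂ} (hx : Dz x = 0) :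
    x = PowerSeries.C (PowerSeries.constantCoeff x) := by
  ext n
  cases n with
  | zero => simp [PowerSeries.coeff_zero_eq_constantCoeff]
  | succ n =>
    have h1 : PowerSeries.coeff n (Dz x) = 0 := by rw [hx]; simp
    rw [Dz] at h1
    simp only [Derivation.coeFn_coe, PowerSeries.coeff_derivative] at h1
    have h2 : ((n:ℂ) + 1) ≠ 0 := Nat.cast_add_one_ne_zero n
    have := mul_eq_zero.mp h1
    rcases this with h | h
    · rw [h]; simp [PowerSeries.coeff_C]
    · exact absurd h h2

/-- Exponential-polynomial power series. -/
def IsExpPoly (x : PowerSeries ℂ) : Prop :=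
  ∃ (s : Finset ℂ) (p : ℂ → Polynomial ℂ),
    x = ∑ l ∈ s, ((p l : Polynomial ℂ) : PowerSeries ℂ) * Ee l

lemma IsExpPoly.zero : IsExpPoly 0 := ⟨∅, fun _ => 0, by simp⟩

lemma IsExpPoly.coe (q : Polynomial ℂ) : IsExpPoly (q : PowerSeries ℂ) :=
  ⟨{0}, fun _ => q, by simp [Ee_zero]⟩

lemma IsExpPoly.add {x y : PowerSeries ℂ} (hx : IsExpPoly x) (hy : IsExpPoly y) :
    IsExpPoly (x + y) := by
  classical
  obtain ⟨s, p, rfl⟩ := hx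
  obtain ⟨t, q, rfl⟩ := hy
  refine ⟨s ∪ t, fun l => (if l ∈ s then p l else 0) + (if l ∈ t then q l else 0), ?_⟩
  have hs : ∑ l ∈ s, ((p l : Polynomial ℂ) : PowerSeries ℂ) * Ee l
      = ∑ l ∈ s ∪ t, (((if l ∈ s then p l else 0) : Polynomial ℂ) : PowerSeries ℂ) * Ee l := by
    rw [← Finset.sum_subset Finset.subset_union_left (fun l _ hl => by simp [hl])]
    exact Finset.sum_congr rfl fun l hl => by simp [hl]
  have ht : ∑ l ∈ t, ((q l : Polynomial ℂ) : PowerSeries ℂ) * Ee l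
      = ∑ l ∈ s ∪ t, (((if l ∈ t then q l else 0) : Polynomial ℂ) : PowerSeries ℂ) * Ee l := by
    rw [← Finset.sum_subset Finset.subset_union_right (fun l _ hl => by simp [hl])]
    exact Finset.sum_congr rfl fun l hl => by simp [hl]
  rw [hs, ht, ← Finset.sum_add_distrib]
  exact Finset.sum_congr rfl fun l _ => by rw [Polynomial.coe_add, add_mul]

lemma IsExpPoly.mul_Ee {x : PowerSeries ℂ} (a : ℂ) (hx : IsExpPoly x) :
    IsExpPoly (Ee a * x) := by
  classical
  obtain ⟨s, p, rfl⟩ := hx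
  refine ⟨s.image (· + a), fun l => p (l - a), ?_⟩
  rw [Finset.sum_image (by intro x _ y _ h; exact add_right_cancel h)]
  · rw [Finset.mul_sum]
    refine Finset.sum_congr rfl fun l _ => ?_
    simp only [add_sub_cancel_right]
    rw [← mul_assoc, mul_comm (Ee a), mul_assoc, Ee_mul, add_comm a l]

lemma IsExpPoly.smul {x : PowerSeries ℂ} (c : ℂ) (hx : IsExpPoly x) :
    IsExpPoly (c • x) := by
  obtain ⟨s, p, rfl⟩ := hx
  refine ⟨s, fun l => c • p l, ?_⟩
  rw [Finset.smul_sum]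
  exact Finset.sum_congr rfl fun l _ => by rw [coe_smul, smul_mul_assoc]

/-- Antiderivatives of exponential polynomials are exponential polynomials. -/
lemma IsExpPoly.antideriv {x : PowerSeries ℂ} (hx : IsExpPoly x) :
    ∃ y, IsExpPoly y ∧ Dz y = x := by
  classical
  obtain ⟨s, p, rfl⟩ := hx
  choose r hr using fun l => T_surj l (p l)
  refine ⟨∑ l ∈ s, ((r l : Polynomial ℂ) : PowerSeries ℂ) * Ee l, ⟨s, r, rfl⟩, ?_⟩
  rw [map_sum]
  exact Finset.sum_congr rfl fun l _ => by rw [Dz_poly_mul_Ee, hr]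

/-- Linear independence of exponentials: if `∑ p_l e^{lz} = 0` then all `p_l = 0`. -/
lemma indep : ∀ (n : ℕ) (s : Finset ℂ), s.card = n → ∀ (p : ℂ → Polynomial ℂ),
    (∑ l ∈ s, ((p l : Polynomial ℂ) : PowerSeries ℂ) * Ee l) = 0 → ∀ l ∈ s, p l = 0 := by
  intro n
  induction n with
  | zero =>
    intro s hs p _ l hl
    rw [Finset.card_eq_zero.mp hs] at hl
    exact absurd hl (Finset.notMem_empty l)
  | succ n ih =>
    intro s hs p hsum l0 hl0
    -- first show that `p l = 0` for all `l ∈ s` other than some fixed `λ0`;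
    -- to handle `l0` uniformly we show: for each `μ ∈ s`, `p μ = 0`.
    -- Strategy: fix `μ := l0`.  Kill the `μ` term with a high derivative.
    set k := (p l0).natDegree + 1 with hk
    -- Multiply the relation by `Ee (-l0)`:
    have h1 : ∑ l ∈ s, ((p l : Polynomial ℂ) : PowerSeries ℂ) * Ee (l - l0) = 0 := by
      have := congrArg (· * Ee (-l0)) hsum
      simpa [Finset.sum_mul, mul_assoc, Ee_mul, sub_eq_add_neg] using this
    -- Apply `Dz^k`:
    have h2 : ∑ l ∈ s, (((T (l - l0) ^ k) (p l) : Polynomial ℂ) : PowerSeries ℂ) * Ee (l - l0) = 0 := by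
      have := congrArg (Dz ^ k) h1
      rw [map_sum, map_zero] at this
      rw [← this]
      exact (Finset.sum_congr rfl fun l _ => (Dz_pow_poly_mul_Ee k (p l) (l - l0)).symm)
    -- the `l0` term vanishes
    have hzero : ((T (l0 - l0) ^ k) (p l0)) = 0 := by
      rw [sub_self, T_zero_eq, Module.End.pow_apply]
      exact Polynomial.iterate_derivative_eq_zero (by omega)
    -- multiply back by `Ee l0`
    have h3 : ∑ l ∈ s, (((T (l - l0) ^ k) (p l) : Polynomial ℂ) : PowerSeries ℂ) * Ee l = 0 := by
      have := congrArg (· * Ee l0) h2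
      simpa [Finset.sum_mul, mul_assoc, Ee_mul, sub_add_cancel] using this
    have h4 : ∑ l ∈ s.erase l0,
        (((T (l - l0) ^ k) (p l) : Polynomial ℂ) : PowerSeries ℂ) * Ee l = 0 := by
      rw [← Finset.add_sum_erase s _ hl0, hzero] at h3
      simpa using h3
    have hcard : (s.erase l0).card = n := by
      rw [Finset.card_erase_of_mem hl0, hs]
      omega
    have hall := ih (s.erase l0) hcard (fun l => (T (l - l0) ^ k) (p l)) h4
    have hples : ∀ l ∈ s, l ≠ l0 → p l = 0 := fun l hl hne =>
      T_pow_inj (l - l0) (sub_ne_zero.mpr hne) k (hall l (Finset.mem_erase.mpr ⟨hne, hl⟩))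
    have h5 : ((p l0 : Polynomial ℂ) : PowerSeries ℂ) * Ee l0 = 0 := by
      rw [← Finset.add_sum_erase s _ hl0] at hsum
      have hrest : ∑ l ∈ s.erase l0, ((p l : Polynomial ℂ) : PowerSeries ℂ) * Ee l = 0 :=
        Finset.sum_eq_zero fun l hl => by
          rw [hples l (Finset.mem_of_mem_erase hl) (Finset.ne_of_mem_erase hl)]; simp
      rw [hrest, add_zero] at hsum; exact hsum
    rcases mul_eq_zero.mp h5 with h | h
    · exact Polynomial.coe_eq_zero_iff.mp h
    · exact absurd h (Ee_ne_zero l0)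

/-- Solutions of constant-coefficient ODEs are exponential polynomials. -/
lemma struct : ∀ (n : ℕ) (Λ : Polynomial ℂ), Λ.natDegree = n → Λ ≠ 0 →
    ∀ P : PowerSeries ℂ, (Polynomial.aeval Dz Λ) P = 0 → IsExpPoly P := by
  intro n
  induction n with
  | zero =>
    intro Λ hdeg hne P hP
    obtain ⟨c, hc⟩ := Polynomial.natDegree_eq_zero.mp hdeg
    have hc0 : c ≠ 0 := fun h => hne (by rw [← hc, h, map_zero])
    rw [← hc, Polynomial.aeval_C, Module.algebraMap_end_apply] at hP
    have : P = 0 := by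
      have := congrArg (fun x => c⁻¹ • x) hP
      simpa [smul_smul, inv_mul_cancel₀ hc0] using this
    rw [this]; exact IsExpPoly.zero
  | succ n ih =>
    intro Λ hdeg hne P hP
    have hdegpos : 0 < Λ.degree := by
      exact Polynomial.natDegree_pos_iff_degree_pos.mp (by omega)
    obtain ⟨lam, hroot⟩ := Complex.exists_root hdegpos
    obtain ⟨M, hM⟩ := (Polynomial.dvd_iff_isRoot.mpr hroot)
    have hXsub : (Polynomial.X - Polynomial.C lam) ≠ 0 := Polynomial.X_sub_C_ne_zero lam
    have hMne : M ≠ 0 := fun h => hne (by rw [hM, h, mul_zero])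
    have hMdeg : M.natDegree = n := by
      have := Polynomial.natDegree_mul hXsub hMne
      rw [← hM, Polynomial.natDegree_X_sub_C] at this
      omega
    set g : PowerSeries ℂ := Dz P - lam • P with hg
    have hfact : Polynomial.aeval Dz Λ
        = (Polynomial.aeval Dz M) * (Polynomial.aeval Dz (Polynomial.X - Polynomial.C lam)) := by
      rw [hM, mul_comm, ← map_mul]
    have hgP : (Polynomial.aeval Dz (Polynomial.X - Polynomial.C lam)) P = g := by
      rw [map_sub, Polynomial.aeval_X, Polynomial.aeval_C, LinearMap.sub_apply,
        Module.algebraMap_end_apply, hg]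
    have hMg : (Polynomial.aeval Dz M) g = 0 := by
      rw [← hgP, ← Module.End.mul_apply, ← hfact, hP]
    have hgExp : IsExpPoly g := ih M hMdeg hMne g hMg
    have hExp2 : IsExpPoly (Ee (-lam) * g) := hgExp.mul_Ee (-lam)
    obtain ⟨h, hhExp, hDh⟩ := hExp2.antideriv
    have hker : Dz (Ee (-lam) * P - h) = 0 := by
      rw [map_sub, hDh, Dz_mul, Dz_Ee, hg]
      simp only [PowerSeries.smul_eq_C_mul, map_neg]
      ring
    have hw := Dz_ker hker
    set c := PowerSeries.constantCoeff (Ee (-lam) * P - h) with hc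
    have hP2 : P = Ee lam * (h + PowerSeries.C c) := by
      have h1 : Ee (-lam) * P = h + PowerSeries.C c := by
        linear_combination hw
      have h2 : Ee lam * (Ee (-lam) * P) = P := by
        rw [← mul_assoc, Ee_mul]
        simp [Ee_zero]
      rw [← h2, h1]
    rw [hP2]
    have : IsExpPoly (h + PowerSeries.C c) := by
      refine hhExp.add ?_
      rw [← Polynomial.coe_C]
      exact IsExpPoly.coe _
    exact this.mul_Ee lam

lemma coe_sum {ι : Type*} (F : Finset ι) (w : ι → Polynomial ℂ) :
    ((∑ z ∈ F, w z : Polynomial ℂ) : PowerSeries ℂ) = ∑ z ∈ F, ((w z : Polynomial ℂ) : PowerSeries ℂ) := by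
  rw [← Polynomial.coeToPowerSeries.ringHom_apply, map_sum]
  simp [Polynomial.coeToPowerSeries.ringHom_apply]

lemma sameray_eq {x y : ℂ} (h : SameRay ℝ x y) (hy : y ≠ 0) : x = (‖x‖ / ‖y‖) • y := by
  have h1 := h.norm_smul_eq
  have hy' : ‖y‖ ≠ 0 := norm_ne_zero_iff.mpr hy
  rw [div_eq_mul_inv, mul_comm, mul_smul, h1, inv_smul_smul₀ hy']

lemma geom {m : ℕ} (hm : 1 ≤ m) {α μ l : ℂ} (hα : α ≠ 0)
    (hμ : ‖μ‖ ≤ m * ‖α‖) (hl : ‖l‖ ≤ ‖α‖)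
    (hsum : μ + l = ((m:ℂ) + 1) * α) : μ = (m:ℂ) * α ∧ l = α := by
  have hA : (0:ℝ) < ‖α‖ := norm_pos_iff.mpr hα
  have hs : ‖μ + l‖ = ((m:ℝ) + 1) * ‖α‖ := by
    rw [hsum, norm_mul]
    congr 1
    have : ((m:ℂ) + 1) = ((m+1:ℕ) : ℂ) := by push_cast; ring
    rw [this, Complex.norm_natCast]
    push_cast; ring
  have htri : ‖μ + l‖ ≤ ‖μ‖ + ‖l‖ := norm_add_le μ l
  have h1 : ‖μ‖ = (m:ℝ) * ‖α‖ := by linarith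
  have h2 : ‖l‖ = ‖α‖ := by linarith
  have hray : SameRay ℝ μ l := sameRay_iff_norm_add.mpr (by linarith)
  have hray2 : SameRay ℝ μ (μ + l) := SameRay.rfl.add_right hray
  have hne : μ + l ≠ 0 := by
    intro hzz
    rw [hzz, norm_zero] at hs
    nlinarith
  have hμeq : μ = (m:ℂ) * α := by
    rw [sameray_eq hray2 hne, hs, h1, hsum, Complex.real_smul]
    have hr : ((m:ℝ) * ‖α‖ / (((m:ℝ) + 1) * ‖α‖)) = (m:ℝ)/((m:ℝ)+1) := by
      rw [mul_div_mul_right _ _ hA.ne']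
    rw [hr]
    have hm1c : ((m:ℂ) + 1) ≠ 0 := by
      have h9 : ((m:ℂ) + 1) = ((m+1 : ℕ) : ℂ) := by push_cast; ring
      rw [h9]
      exact_mod_cast Nat.succ_ne_zero m
    push_cast
    field_simp
  refine ⟨hμeq, ?_⟩
  have := hsum
  rw [hμeq] at this
  linear_combination this

lemma pow_rep (s : Finset ℂ) (p : ℂ → Polynomial ℂ) (α : ℂ) (hαs : α ∈ s)
    (hmax : ∀ l ∈ s, ‖l‖ ≤ ‖α‖) (hα0 : α ≠ 0) (P : PowerSeries ℂ)
    (hP : P = ∑ l ∈ s, ((p l : Polynomial ℂ) : PowerSeries ℂ) * Ee l) :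
    ∀ m : ℕ, 1 ≤ m → ∃ (t : Finset ℂ) (q : ℂ → Polynomial ℂ),
      P ^ m = ∑ μ ∈ t, ((q μ : Polynomial ℂ) : PowerSeries ℂ) * Ee μ ∧
      ((m:ℂ) * α) ∈ t ∧ q ((m:ℂ)*α) = (p α)^m ∧ ∀ μ ∈ t, ‖μ‖ ≤ (m:ℝ) * ‖α‖ := by
  classical
  intro m
  induction m with
  | zero => intro h; omega
  | succ m ihm =>
    intro _
    rcases Nat.eq_or_lt_of_le (Nat.one_le_iff_ne_zero.mpr (Nat.succ_ne_zero m)) with h1 | h1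
    · -- m + 1 = 1, i.e. m = 0
      have hm0 : m = 0 := by omega
      subst hm0
      refine ⟨s, p, ?_, ?_, ?_, ?_⟩
      · rw [pow_one, hP]
      · simpa using hαs
      · simp
      · intro μ hμ; simpa using hmax μ hμ
    · -- m ≥ 1
      have hm : 1 ≤ m := by omega
      obtain ⟨t, q, hPm, hmt, hqval, hbound⟩ := ihm hm
      set g : ℂ × ℂ → ℂ := fun z => z.1 + z.2 with hgdef
      set t' : Finset ℂ := (t ×ˢ s).image g with ht'
      set q' : ℂ → Polynomial ℂ :=
        fun ν => ∑ z ∈ (t ×ˢ s).filter (fun z' => g z' = ν), q z.1 * p z.2 with hq'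
      have hterm : ∀ z : ℂ × ℂ,
          (((q z.1 : Polynomial ℂ) : PowerSeries ℂ) * Ee z.1) * (((p z.2 : Polynomial ℂ) : PowerSeries ℂ) * Ee z.2)
          = (((q z.1 * p z.2 : Polynomial ℂ) : PowerSeries ℂ)) * Ee (g z) := by
        intro z
        rw [Polynomial.coe_mul, mul_mul_mul_comm, Ee_mul]
      have hmul : P ^ (m+1) = ∑ z ∈ t ×ˢ s,
          (((q z.1 * p z.2 : Polynomial ℂ) : PowerSeries ℂ)) * Ee (g z) := by
        rw [pow_succ, hPm, hP, Finset.sum_mul_sum, ← Finset.sum_product']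
        exact Finset.sum_congr rfl fun z _ => hterm z
      have hregroup : P ^ (m+1) = ∑ ν ∈ t', ((q' ν : Polynomial ℂ) : PowerSeries ℂ) * Ee ν := by
        rw [hmul, ht']
        rw [Finset.sum_image' (fun z => (((q z.1 * p z.2 : Polynomial ℂ) : PowerSeries ℂ)) * Ee (g z))]
        intro c hc
        rw [hq', coe_sum, Finset.sum_mul]
        refine Finset.sum_congr rfl fun z hz => ?_
        have : g z = g c := (Finset.mem_filter.mp hz).2
        rw [this]
      -- the special fiber
      have hsing : (t ×ˢ s).filter (fun z' => g z' = ((m:ℂ)+1) * α) = {((m:ℂ)*α, α)} := by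
        apply Finset.eq_singleton_iff_unique_mem.mpr
        constructor
        · refine Finset.mem_filter.mpr ⟨Finset.mem_product.mpr ⟨hmt, hαs⟩, ?_⟩
          show (m:ℂ)*α + α = ((m:ℂ)+1) * α
          ring
        · intro z hz
          obtain ⟨hzmem, hzsum⟩ := Finset.mem_filter.mp hz
          obtain ⟨hz1, hz2⟩ := Finset.mem_product.mp hzmem
          obtain ⟨e1, e2⟩ := geom hm hα0 (hbound z.1 hz1) (hmax z.2 hz2) hzsum
          exact Prod.ext e1 e2
      refine ⟨t', q', hregroup, ?_, ?_, ?_⟩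
      · refine Finset.mem_image.mpr ⟨((m:ℂ)*α, α), Finset.mem_product.mpr ⟨hmt, hαs⟩, ?_⟩
        show (m:ℂ)*α + α = ((m+1:ℕ):ℂ) * α
        push_cast; ring
      · have hcast : ((m+1:ℕ):ℂ) * α = ((m:ℂ)+1) * α := by push_cast; ring
        simp only [hq', hcast]
        rw [hsing, Finset.sum_singleton, hqval, pow_succ]
      · intro ν hν
        obtain ⟨z, hzmem, hzeq⟩ := Finset.mem_image.mp hν
        obtain ⟨hz1, hz2⟩ := Finset.mem_product.mp hzmem
        have b1 := hbound z.1 hz1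
        have b2 := hmax z.2 hz2
        rw [← hzeq]
        have : ‖g z‖ ≤ ‖z.1‖ + ‖z.2‖ := norm_add_le z.1 z.2
        push_cast
        nlinarith [norm_nonneg α]

end VanishingAux

open VanishingAux in
/-- If `Λ(D)^m (P^m) = 0` for all `m ≥ 1`, where `Λ` is a nonzero one-variable
polynomial, then the power series `P` is a polynomial. -/
theorem vanishing_one_variable_poly (Λ : Polynomial ℂ) (hΛ : Λ ≠ 0)
    (P : PowerSeries ℂ)
    (h : ∀ m : ℕ, 1 ≤ m → ((Polynomial.aeval Dz Λ) ^ m) (P ^ m) = 0) :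
    ∃ p : Polynomial ℂ, (p : PowerSeries ℂ) = P := by
  classical
  have h1 := h 1 le_rfl
  rw [pow_one, pow_one] at h1
  obtain ⟨s0, p0, hPrep⟩ := struct Λ.natDegree Λ rfl hΛ P h1
  set s : Finset ℂ := s0.filter (fun l => p0 l ≠ 0) with hsdef
  have hPs : P = ∑ l ∈ s, ((p0 l : Polynomial ℂ) : PowerSeries ℂ) * Ee l := by
    rw [hPrep, hsdef]
    refine (Finset.sum_filter_of_ne fun l hl hne => ?_).symm
    intro hp0
    exact hne (by rw [hp0]; simp)
  by_cases hzero : ∀ l ∈ s, l = (0:ℂ)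
  · rcases Finset.subset_singleton_iff.mp
        (fun l hl => Finset.mem_singleton.mpr (hzero l hl)) with hs | hs
    · exact ⟨0, by rw [hPs, hs]; simp⟩
    · exact ⟨p0 0, by rw [hPs, hs]; simp [Ee_zero]⟩
  · push_neg at hzero
    obtain ⟨β, hβs, hβ0⟩ := hzero
    obtain ⟨α, hαs, hαmax⟩ := s.exists_max_image (fun l => ‖l‖) ⟨β, hβs⟩
    have hα0 : α ≠ 0 := by
      intro h0
      have h9 := hαmax β hβs
      rw [h0, norm_zero] at h9
      exact hβ0 (norm_le_zero_iff.mp h9)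
    have hfin : ({ k : ℕ | Λ.IsRoot ((k:ℂ) * α) } ∪ {0}).Finite := by
      apply Set.Finite.union _ (Set.finite_singleton 0)
      have hroots := Λ.finite_setOf_isRoot hΛ
      have heq : { k : ℕ | Λ.IsRoot ((k:ℂ)*α) }
          = (fun k : ℕ => (k:ℂ)*α) ⁻¹' {x | Λ.IsRoot x} := rfl
      rw [heq]
      apply Set.Finite.preimage _ hroots
      intro a _ b _ hab
      have : (a:ℂ) = b := mul_right_cancel₀ hα0 hab
      exact_mod_cast this
    obtain ⟨m, hm⟩ := hfin.infinite_compl.nonempty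
    simp only [Set.mem_compl_iff, Set.mem_union, Set.mem_setOf_eq,
      Set.mem_singleton_iff, not_or] at hm
    obtain ⟨hmroot, hm0⟩ := hm
    have hm1 : 1 ≤ m := Nat.one_le_iff_ne_zero.mpr hm0
    obtain ⟨t, q, hPm, hmt, hqval, hbound⟩ := pow_rep s p0 α hαs hαmax hα0 P hPs m hm1
    have hap : ((Polynomial.aeval Dz Λ) ^ m) (P ^ m) = 0 := h m hm1
    rw [← map_pow, hPm, map_sum] at hap
    have hap2 : ∑ μ ∈ t,
        (((Polynomial.aeval (T μ) (Λ^m)) (q μ) : Polynomial ℂ) : PowerSeries ℂ) * Ee μ = 0 := by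
      rw [← hap]
      exact Finset.sum_congr rfl fun μ _ => (aeval_Dz_poly_mul_Ee (Λ^m) (q μ) μ).symm
    have hzero2 := indep t.card t rfl
      (fun μ => (Polynomial.aeval (T μ) (Λ^m)) (q μ)) hap2 ((m:ℂ)*α) hmt
    set ν : ℂ := (m:ℂ)*α with hν
    have hcomp : Polynomial.aeval (T ν) (Λ^m)
        = Polynomial.aeval DL ((Λ^m).comp (Polynomial.X + Polynomial.C ν)) := by
      rw [Polynomial.aeval_comp, ← T_eq_aeval]
    have hc0 : ((Λ^m).comp (Polynomial.X + Polynomial.C ν)).coeff 0 ≠ 0 := by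
      rw [Polynomial.coeff_zero_eq_eval_zero, Polynomial.eval_comp]
      simp only [Polynomial.eval_add, Polynomial.eval_X, Polynomial.eval_C, zero_add,
        Polynomial.eval_pow]
      exact pow_ne_zero m hmroot
    have hqz : q ν = 0 := aeval_DL_inj _ hc0 (by rw [← hcomp]; exact hzero2)
    rw [hqval] at hqz
    have hpα : p0 α ≠ 0 := (Finset.mem_filter.mp hαs).2
    exact absurd hqz (pow_ne_zero m hpα)
end

section
/- For any polynomial Λ(ξ) ∈ ℂ[ξ] in one variable and any nonzero distinct complex numbers λ₁,…,λ_k, the formal power series e^{λ₁ z},…,e^{λ_k z} are linearly independent over the field of rational functions ℂ(z). -/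
/-- The formal power series `e^{λ z} = Σ_{n≥0} λ^n z^n / n!`. -/
noncomputable def expSeries (lam : ℂ) : PowerSeries ℂ :=
  PowerSeries.mk fun n => lam ^ n / (Nat.factorial n : ℂ)

open PowerSeries Polynomial

lemma expSeries_eq_rescale (a : ℂ) : expSeries a = rescale a (PowerSeries.exp ℂ) := by
  ext n
  simp [expSeries, coeff_rescale, PowerSeries.coeff_exp, div_eq_mul_inv]

lemma expSeries_mul (a b : ℂ) : expSeries a * expSeries b = expSeries (a + b) := by
  simp [expSeries_eq_rescale, PowerSeries.exp_mul_exp_eq_exp_add]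

lemma expSeries_ne_zero (a : ℂ) : expSeries a ≠ 0 := by
  intro h
  have := congrArg (PowerSeries.coeff 0) h
  simp [expSeries] at this

lemma derivative_expSeries (a : ℂ) :
    d⁄dX ℂ (expSeries a) = PowerSeries.C a * expSeries a := by
  ext n
  rw [PowerSeries.coeff_derivative, PowerSeries.coeff_C_mul]
  simp only [expSeries, PowerSeries.coeff_mk, Nat.factorial_succ]
  have h1 : (Nat.factorial n : ℂ) ≠ 0 := Nat.cast_ne_zero.mpr (Nat.factorial_ne_zero n)
  have h2 : ((n : ℂ) + 1) ≠ 0 := Nat.cast_add_one_ne_zero n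
  push_cast
  field_simp
  ring

/-- The operator `p ↦ p' + ν p`. -/
noncomputable def expT (ν : ℂ) (p : Polynomial ℂ) : Polynomial ℂ :=
  Polynomial.derivative p + Polynomial.C ν * p

lemma expT_eq_zero_iff {ν : ℂ} (hν : ν ≠ 0) (p : Polynomial ℂ) (h : expT ν p = 0) :
    p = 0 := by
  by_contra hp
  have hc : (expT ν p).coeff p.natDegree = 0 := by rw [h]; simp
  rw [expT, Polynomial.coeff_add, Polynomial.coeff_C_mul, Polynomial.coeff_derivative,
    Polynomial.coeff_natDegree_succ_eq_zero] at hc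
  simp only [zero_mul, zero_add] at hc
  exact hp (Polynomial.leadingCoeff_eq_zero.mp ((mul_eq_zero.mp hc).resolve_left hν))

lemma expT_iterate_eq_zero {ν : ℂ} (hν : ν ≠ 0) (N : ℕ) (p : Polynomial ℂ)
    (h : (expT ν)^[N] p = 0) : p = 0 := by
  induction N generalizing p with
  | zero => simpa using h
  | succ N ih =>
    rw [Function.iterate_succ_apply] at h
    exact expT_eq_zero_iff hν _ (ih _ h)

lemma expT_zero (p : Polynomial ℂ) : expT 0 p = Polynomial.derivative p := by
  simp [expT]

lemma step (t : Finset ℂ) (d : ℂ → Polynomial ℂ)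
    (h : (∑ ν ∈ t, (d ν : PowerSeries ℂ) * expSeries ν) = 0) :
    (∑ ν ∈ t, ((expT ν (d ν) : Polynomial ℂ) : PowerSeries ℂ) * expSeries ν) = 0 := by
  have hD := congrArg (d⁄dX ℂ) h
  rw [map_sum, map_zero] at hD
  rw [← hD]
  refine Finset.sum_congr rfl fun ν _ => ?_
  rw [Derivation.leibniz, derivative_expSeries, PowerSeries.derivative_coe]
  simp only [expT, Polynomial.coe_add, Polynomial.coe_mul, Polynomial.coe_C, smul_eq_mul]
  ring

lemma key (n : ℕ) : ∀ (t : Finset ℂ), t.card ≤ n → ∀ (d : ℂ → Polynomial ℂ),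
    (∑ ν ∈ t, (d ν : PowerSeries ℂ) * expSeries ν) = 0 → ∀ ν ∈ t, d ν = 0 := by
  induction n with
  | zero =>
    intro t ht d _ ν hν
    rw [Nat.le_zero, Finset.card_eq_zero] at ht
    simp [ht] at hν
  | succ n ih =>
    intro t ht d hrel μ₀ hμ₀
    -- multiply by expSeries (-μ₀)
    have h2 : (∑ ν ∈ t, (d ν : PowerSeries ℂ) * expSeries (ν - μ₀)) = 0 := by
      have := congrArg (· * expSeries (-μ₀)) hrel
      simpa [Finset.sum_mul, mul_assoc, expSeries_mul, sub_eq_add_neg] using this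
    set t' : Finset ℂ := t.image (· - μ₀) with ht'
    set d' : ℂ → Polynomial ℂ := fun ν => d (ν + μ₀) with hd'
    have hsub : Function.Injective (· - μ₀) := fun x y h => by simpa using congrArg (· + μ₀) h
    have h3 : (∑ ν ∈ t', (d' ν : PowerSeries ℂ) * expSeries ν) = 0 := by
      rw [ht', Finset.sum_image (fun x _ y _ h => hsub h)]
      simpa [hd'] using h2
    -- iterate the derivative relation
    have h4 : ∀ N : ℕ,
        (∑ ν ∈ t', (((expT ν)^[N] (d' ν) : Polynomial ℂ) : PowerSeries ℂ) * expSeries ν) = 0 := by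
      intro N
      induction N with
      | zero => simpa using h3
      | succ N ihN =>
        have := step t' (fun ν => (expT ν)^[N] (d' ν)) ihN
        simpa [← Function.iterate_succ_apply' (expT _)] using this
    set N : ℕ := (d' 0).natDegree + 1 with hN
    have h0t' : (0 : ℂ) ∈ t' := Finset.mem_image.mpr ⟨μ₀, hμ₀, by simp⟩
    have hzero : (expT 0)^[N] (d' 0) = 0 := by
      have : (expT 0)^[N] (d' 0) = (Polynomial.derivative)^[N] (d' 0) := by
        congr 1
        funext p
        exact expT_zero p
      rw [this]
      exact Polynomial.iterate_derivative_eq_zero (by omega)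
    have h5 : (∑ ν ∈ t'.erase 0,
        (((expT ν)^[N] (d' ν) : Polynomial ℂ) : PowerSeries ℂ) * expSeries ν) = 0 := by
      have := h4 N
      rwa [← Finset.add_sum_erase t' _ h0t', hzero, Polynomial.coe_zero, zero_mul, zero_add]
        at this
    have hcard : (t'.erase 0).card ≤ n := by
      have h1 : t'.card ≤ t.card := Finset.card_image_le
      have h2 : (t'.erase 0).card = t'.card - 1 := Finset.card_erase_of_mem h0t'
      omega
    have h6 : ∀ ν ∈ t'.erase 0, (expT ν)^[N] (d' ν) = 0 := ih _ hcard _ h5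
    have h7 : ∀ ν ∈ t', ν ≠ 0 → d' ν = 0 := fun ν hν hν0 =>
      expT_iterate_eq_zero hν0 N _ (h6 ν (Finset.mem_erase.mpr ⟨hν0, hν⟩))
    have h8 : ∀ μ ∈ t, μ ≠ μ₀ → d μ = 0 := by
      intro μ hμ hne
      have : d' (μ - μ₀) = 0 :=
        h7 _ (Finset.mem_image.mpr ⟨μ, hμ, rfl⟩) (sub_ne_zero.mpr hne)
      simpa [hd'] using this
    -- now show d μ₀ = 0 and conclude
    have h9 : (d μ₀ : PowerSeries ℂ) * expSeries μ₀ = 0 := by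
      have hsum : (∑ ν ∈ t, (d ν : PowerSeries ℂ) * expSeries ν)
          = (d μ₀ : PowerSeries ℂ) * expSeries μ₀ :=
        Finset.sum_eq_single_of_mem μ₀ hμ₀ fun μ hμ hne => by
          rw [h8 μ hμ hne, Polynomial.coe_zero, zero_mul]
      rw [← hsum]; exact hrel
    have hd0 : d μ₀ = 0 := by
      rcases mul_eq_zero.mp h9 with h | h
      · exact Polynomial.coe_eq_zero_iff.mp h
      · exact absurd h (expSeries_ne_zero μ₀)
    exact hd0

/-- Distinct nonzero exponentials `e^{λ_i z}` are linearly independent over `ℂ(z)`: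
any relation `Σ c_i(z) e^{λ_i z} = 0` with polynomial coefficients forces all `c_i = 0`. -/
theorem exp_linearly_independent (Λ : Polynomial ℂ) (k : ℕ) (lam : Fin k → ℂ)
    (hne : ∀ i, lam i ≠ 0) (hinj : Function.Injective lam)
    (c : Fin k → Polynomial ℂ)
    (hrel : (∑ i, (c i : PowerSeries ℂ) * expSeries (lam i)) = 0) :
    ∀ i, c i = 0 := by
  set t : Finset ℂ := Finset.image lam Finset.univ with ht
  set d : ℂ → Polynomial ℂ := Function.extend lam c 0 with hd
  have hrel' : (∑ ν ∈ t, (d ν : PowerSeries ℂ) * expSeries ν) = 0 := by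
    rw [ht, Finset.sum_image (fun x _ y _ h => hinj h)]
    simpa [hd, hinj.extend_apply] using hrel
  intro i
  have := key t.card t le_rfl d hrel' (lam i) (Finset.mem_image_of_mem lam (Finset.mem_univ i))
  rwa [hd, hinj.extend_apply] at this
end

section
/- Let Λ = ∂_y ∂_x acting on formal power series in ℂ[[x,y]], and let P(x,y) = x + e^y. Then for every m ≥ 1, Λ^m(P^m) = 0 but Λ^m(P^{m+1}) = (m+1)!·e^y ≠ 0. -/
/-- The partial derivative `∂_i` on `ℂ[[x,y]]`, defined coefficientwise. -/
noncomputable def pd (i : Fin 2) (f : MvPowerSeries (Fin 2) ℂ) :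
    MvPowerSeries (Fin 2) ℂ :=
  fun α => ((α i : ℂ) + 1) * MvPowerSeries.coeff (α + Finsupp.single i 1) f

/-- The formal power series `e^y = Σ_{n≥0} y^n / n!` in `ℂ[[x,y]]`. -/
noncomputable def expY : MvPowerSeries (Fin 2) ℂ :=
  fun α => if α 0 = 0 then ((Nat.factorial (α 1) : ℂ))⁻¹ else 0

open Finsupp Finset MvPowerSeries

lemma pd_coeff (i : Fin 2) (f : MvPowerSeries (Fin 2) ℂ) (α : Fin 2 →₀ ℕ) :
    pd i f α = ((α i : ℂ) + 1) * f (α + Finsupp.single i 1) := rfl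

lemma sum_shift (i : Fin 2) (n : Fin 2 →₀ ℕ) (F : (Fin 2 →₀ ℕ) × (Fin 2 →₀ ℕ) → ℂ) :
    ∑ p ∈ antidiagonal ((n + Finsupp.single i 1 : Fin 2 →₀ ℕ)), (p.1 i : ℂ) * F p
      = ∑ p ∈ antidiagonal n, ((p.1 i : ℂ) + 1) * F (p.1 + Finsupp.single i 1, p.2) := by
  rw [← Finset.sum_filter_of_ne (p := fun p => p.1 i ≠ 0)
    (by
      intro p hp h h0
      apply h
      rw [h0]
      simp)]
  refine (Finset.sum_bij' (fun p _ => (p.1 + Finsupp.single i 1, p.2))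
    (fun p _ => (p.1 - Finsupp.single i 1, p.2)) ?_ ?_ ?_ ?_ ?_).symm
  · -- forward map lands in filter
    intro p hp
    rw [Finset.HasAntidiagonal.mem_antidiagonal] at hp
    simp only [Finset.mem_filter, Finset.HasAntidiagonal.mem_antidiagonal]
    constructor
    · rw [← hp]; abel
    · simp
  · -- backward map lands in antidiagonal n
    intro p hp
    simp only [Finset.mem_filter, Finset.HasAntidiagonal.mem_antidiagonal] at hp
    obtain ⟨h1, h2⟩ := hp
    have hle : Finsupp.single i 1 ≤ p.1 := by
      rw [Finsupp.single_le_iff]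
      omega
    rw [Finset.HasAntidiagonal.mem_antidiagonal]
    have h3 : (p.1 - Finsupp.single i 1 + Finsupp.single i 1) + p.2
        = n + Finsupp.single i 1 := by rw [tsub_add_cancel_of_le hle]; exact h1
    have h4 : (p.1 - Finsupp.single i 1 + p.2) + Finsupp.single i 1
        = n + Finsupp.single i 1 := by
      rw [← h3]; exact add_right_comm _ _ _
    exact add_right_cancel h4
  · intro p hp
    simp
  · intro p hp
    simp only [Finset.mem_filter, Finset.HasAntidiagonal.mem_antidiagonal] at hp
    have hle : Finsupp.single i 1 ≤ p.1 := by
      rw [Finsupp.single_le_iff]; omega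
    simp [tsub_add_cancel_of_le hle]
  · intro p hp
    simp only
    congr 1
    rw [Finsupp.add_apply, Finsupp.single_apply, if_pos rfl]
    push_cast
    ring

lemma pd_mul (i : Fin 2) (f g : MvPowerSeries (Fin 2) ℂ) :
    pd i (f * g) = pd i f * g + f * pd i g := by
  classical
  funext n
  have hmul : ∀ (u v : MvPowerSeries (Fin 2) ℂ) (β : Fin 2 →₀ ℕ),
      (u * v) β = ∑ p ∈ antidiagonal β, u p.1 * v p.2 := fun u v β =>
    MvPowerSeries.coeff_mul (R := ℂ) (n := β) (φ := u) (ψ := v)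
  have hadd : (pd i f * g + f * pd i g) n = (pd i f * g) n + (f * pd i g) n := rfl
  rw [hadd, pd_coeff, hmul, hmul, hmul, Finset.mul_sum]
  have step1 : ∑ p ∈ antidiagonal ((n + Finsupp.single i 1 : Fin 2 →₀ ℕ)),
      ((n i : ℂ) + 1) * (f p.1 * g p.2)
      = ∑ p ∈ antidiagonal ((n + Finsupp.single i 1 : Fin 2 →₀ ℕ)),
        (((p.1 i : ℂ)) * (f p.1 * g p.2) + ((p.2 i : ℂ)) * (f p.1 * g p.2)) := by
    refine Finset.sum_congr rfl fun p hp => ?_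
    rw [Finset.HasAntidiagonal.mem_antidiagonal] at hp
    have : p.1 i + p.2 i = n i + 1 := by
      have := DFunLike.congr_fun hp i
      simpa [Finsupp.add_apply, Finsupp.single_apply] using this
    have hc : ((p.1 i : ℂ)) + (p.2 i : ℂ) = (n i : ℂ) + 1 := by
      exact_mod_cast congrArg (fun t : ℕ => (t : ℂ)) this
    rw [← hc]; ring
  rw [step1, Finset.sum_add_distrib]
  congr 1
  · rw [sum_shift i n (fun p => f p.1 * g p.2)]
    refine Finset.sum_congr rfl fun p hp => ?_
    rw [pd_coeff]; ring
  · have hswap : ∀ (β : Fin 2 →₀ ℕ) (F : (Fin 2 →₀ ℕ) × (Fin 2 →₀ ℕ) → ℂ),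
        ∑ p ∈ antidiagonal β, F p = ∑ p ∈ antidiagonal β, F p.swap := by
      intro β F
      conv_lhs => rw [← Finset.HasAntidiagonal.map_swap_antidiagonal (n := β)]
      rw [Finset.sum_map]
      rfl
    rw [hswap _ (fun p => ((p.2 i : ℂ)) * (f p.1 * g p.2)),
      hswap n (fun p => f p.1 * pd i g p.2)]
    simp only [Prod.fst_swap, Prod.snd_swap]
    rw [sum_shift i n (fun p => f p.2 * g p.1)]
    refine Finset.sum_congr rfl fun p hp => ?_
    rw [pd_coeff]; ring

lemma pd_add (i : Fin 2) (f g : MvPowerSeries (Fin 2) ℂ) :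
    pd i (f + g) = pd i f + pd i g := by
  funext n
  show ((n i : ℂ) + 1) * (f + g) _ = _
  have : (f + g) (n + Finsupp.single i 1)
      = f (n + Finsupp.single i 1) + g (n + Finsupp.single i 1) := rfl
  rw [this]
  show _ = pd i f n + pd i g n
  rw [pd_coeff, pd_coeff]; ring

lemma pd_smul (i : Fin 2) (c : ℂ) (f : MvPowerSeries (Fin 2) ℂ) :
    pd i (c • f) = c • pd i f := by
  funext n
  show ((n i : ℂ) + 1) * (c • f) _ = c * pd i f n
  have : (c • f) (n + Finsupp.single i 1) = c * f (n + Finsupp.single i 1) := rfl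
  rw [this, pd_coeff]; ring

lemma pd_zero (i : Fin 2) : pd i (0 : MvPowerSeries (Fin 2) ℂ) = 0 := by
  funext n
  show ((n i : ℂ) + 1) * (0 : MvPowerSeries (Fin 2) ℂ) _ = (0 : MvPowerSeries (Fin 2) ℂ) n
  have h1 : (0 : MvPowerSeries (Fin 2) ℂ) (n + Finsupp.single i 1) = 0 := rfl
  have h2 : (0 : MvPowerSeries (Fin 2) ℂ) n = 0 := rfl
  rw [h1, h2, mul_zero]

lemma pd_one (i : Fin 2) : pd i (1 : MvPowerSeries (Fin 2) ℂ) = 0 := by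
  classical
  funext n
  show ((n i : ℂ) + 1) * MvPowerSeries.coeff _ 1 = (0 : MvPowerSeries (Fin 2) ℂ) n
  have h2 : (0 : MvPowerSeries (Fin 2) ℂ) n = 0 := rfl
  rw [MvPowerSeries.coeff_one, if_neg, mul_zero, h2]
  intro h
  have := DFunLike.congr_fun h i
  simp [Finsupp.add_apply, Finsupp.single_apply] at this

lemma pd0_X : pd 0 (MvPowerSeries.X 0 : MvPowerSeries (Fin 2) ℂ) = 1 := by
  classical
  funext n
  show ((n 0 : ℂ) + 1) * MvPowerSeries.coeff _ (MvPowerSeries.X 0)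
      = MvPowerSeries.coeff n 1
  rw [MvPowerSeries.coeff_X, MvPowerSeries.coeff_one]
  by_cases h : n = 0
  · subst h; rw [if_pos (by simp), if_pos rfl]; simp
  · rw [if_neg, if_neg h]
    · ring
    · intro hc
      apply h
      exact add_right_cancel (hc.trans (zero_add _).symm)

lemma pd1_X : pd 1 (MvPowerSeries.X 0 : MvPowerSeries (Fin 2) ℂ) = 0 := by
  classical
  funext n
  show ((n 1 : ℂ) + 1) * MvPowerSeries.coeff _ (MvPowerSeries.X 0)
      = (0 : MvPowerSeries (Fin 2) ℂ) n
  have h2 : (0 : MvPowerSeries (Fin 2) ℂ) n = 0 := rfl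
  rw [MvPowerSeries.coeff_X, if_neg, mul_zero, h2]
  intro h
  have := DFunLike.congr_fun h 1
  simp [Finsupp.add_apply, Finsupp.single_apply] at this

lemma pd0_expY : pd 0 expY = 0 := by
  funext n
  rw [pd_coeff]
  show ((n 0 : ℂ) + 1) * expY (n + Finsupp.single 0 1) = (0 : MvPowerSeries (Fin 2) ℂ) n
  have h2 : (0 : MvPowerSeries (Fin 2) ℂ) n = 0 := rfl
  have h1 : expY (n + Finsupp.single 0 1) = 0 := by
    simp only [expY, Finsupp.add_apply, Finsupp.single_apply]
    rw [if_neg]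
    simp
  rw [h1, mul_zero, h2]

lemma pd1_expY : pd 1 expY = expY := by
  funext n
  rw [pd_coeff]
  show ((n 1 : ℂ) + 1) * expY (n + Finsupp.single 1 1) = expY n
  simp only [expY, Finsupp.add_apply, Finsupp.single_apply]
  by_cases h : n 0 = 0
  · rw [if_pos (by simp [h]), if_pos h]
    simp only [if_true, eq_self_iff_true, if_pos rfl]
    rw [Nat.factorial_succ]
    have h1 : ((n 1 : ℂ) + 1) ≠ 0 := by
      have : (((n 1 : ℕ) + 1 : ℕ) : ℂ) ≠ 0 := Nat.cast_ne_zero.mpr (Nat.succ_ne_zero _)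
      push_cast at this; exact this
    have h2 : ((Nat.factorial (n 1) : ℂ)) ≠ 0 :=
      Nat.cast_ne_zero.mpr (Nat.factorial_ne_zero _)
    push_cast
    field_simp
  · rw [if_neg (by simp [h]), if_neg h, mul_zero]

lemma pd_iterate_smul (i : Fin 2) (c : ℂ) (f : MvPowerSeries (Fin 2) ℂ) (m : ℕ) :
    (pd i)^[m] (c • f) = c • (pd i)^[m] f := by
  induction m generalizing f with
  | zero => rfl
  | succ k ih => rw [Function.iterate_succ_apply, pd_smul, ih, Function.iterate_succ_apply]

noncomputable abbrev P : MvPowerSeries (Fin 2) ℂ := MvPowerSeries.X 0 + expY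

lemma pd0_P : pd 0 P = 1 := by rw [pd_add, pd0_X, pd0_expY, add_zero]

lemma pd1_P : pd 1 P = expY := by rw [pd_add, pd1_X, pd1_expY, zero_add]

lemma pd0_pow (k : ℕ) : pd 0 (P ^ (k + 1)) = ((k : ℂ) + 1) • P ^ k := by
  induction k with
  | zero =>
    rw [pow_one, pd0_P, pow_zero]
    norm_num
  | succ j ih =>
    rw [pow_succ P (j + 1), pd_mul, ih, pd0_P, mul_one, smul_mul_assoc, ← pow_succ]
    push_cast
    module

lemma pd0_iter (m k : ℕ) :
    (pd 0)^[m] (P ^ (m + k)) = (((m + k).factorial : ℂ) / (k.factorial : ℂ)) • P ^ k := by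
  induction m with
  | zero =>
    simp only [Nat.zero_add, Function.iterate_zero, id]
    rw [div_self (by exact_mod_cast Nat.factorial_ne_zero k), one_smul]
  | succ j ih =>
    have harr : j + 1 + k = (j + k) + 1 := by omega
    rw [Function.iterate_succ_apply, harr, pd0_pow, pd_iterate_smul, ih, smul_smul]
    congr 1
    have hf : ((j + k + 1).factorial : ℂ) = ((j + k : ℕ) + 1) * ((j + k).factorial : ℂ) := by
      rw [Nat.factorial_succ]; push_cast; ring
    rw [hf]
    push_cast
    ring

lemma pd1_iter_expY (m : ℕ) : (pd 1)^[m] expY = expY := by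
  induction m with
  | zero => rfl
  | succ j ih => rw [Function.iterate_succ_apply, pd1_expY, ih]

lemma pd1_iter_zero (m : ℕ) : (pd 1)^[m] (0 : MvPowerSeries (Fin 2) ℂ) = 0 := by
  induction m with
  | zero => rfl
  | succ j ih => rw [Function.iterate_succ_apply, pd_zero, ih]

/-- For `Λ = ∂_y ∂_x` and `P = x + e^y`, one has `Λ^m(P^m) = 0` but
`Λ^m(P^{m+1}) = (m+1)! e^y ≠ 0` for every `m ≥ 1`. -/
theorem counterexample_vc_power_series (m : ℕ) (hm : 1 ≤ m) :
    (pd 1)^[m] ((pd 0)^[m] ((MvPowerSeries.X 0 + expY) ^ m)) = 0 ∧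
    (pd 1)^[m] ((pd 0)^[m] ((MvPowerSeries.X 0 + expY) ^ (m + 1))) =
      ((Nat.factorial (m + 1) : ℂ)) • expY ∧
    ((Nat.factorial (m + 1) : ℂ)) • expY ≠ 0 := by
  obtain ⟨j, rfl⟩ : ∃ j, m = j + 1 := ⟨m - 1, by omega⟩
  set m := j + 1 with hmdef
  refine ⟨?_, ?_, ?_⟩
  · have h0 : (pd 0)^[m] (P ^ m) = ((m.factorial : ℂ)) • (1 : MvPowerSeries (Fin 2) ℂ) := by
      have := pd0_iter m 0
      simpa using this
    show (pd 1)^[m] ((pd 0)^[m] (P ^ m)) = 0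
    rw [h0, hmdef, Function.iterate_succ_apply, pd_smul, pd_one, smul_zero, pd1_iter_zero]
  · have h0 : (pd 0)^[m] (P ^ (m + 1)) = (((m + 1).factorial : ℂ)) • P := by
      have := pd0_iter m 1
      simpa [Nat.factorial_one, pow_one] using this
    show (pd 1)^[m] ((pd 0)^[m] (P ^ (m + 1))) = _
    rw [h0, pd_iterate_smul, hmdef, Function.iterate_succ_apply, pd1_P, pd1_iter_expY]
  · intro h
    have h0 : (((m + 1).factorial : ℂ)) * expY (0 : Fin 2 →₀ ℕ) = 0 := congrFun h 0
    have h1 : expY (0 : Fin 2 →₀ ℕ) = 1 := by simp [expY]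
    rw [h1, mul_one] at h0
    exact Nat.cast_ne_zero.mpr (Nat.factorial_ne_zero _) h0
end

section
/- Let P(z) ∈ ℂ[z₁,…,z_n] and Λ = Λ(∂) a differential operator with constant coefficients, and suppose (Poly(P) − Poly(Λ)) ∩ (ℝ_{≥0})^n = ∅. Then Λ^m(P^m) = 0 for every m ≥ 1, and moreover for every g(z) ∈ ℂ[z] there exists N such that Λ^m(P^m g) = 0 for all m ≥ N. -/
open MvPolynomial

variable {n : ℕ}

/-- The constant-coefficient differential operator `Λ(∂)` associated to the
polynomial `Λ(ξ)`: it sends `z^μ` in `Λ` to `∂^μ = ∂₁^{μ₁}⋯∂ₙ^{μₙ}`. -/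
noncomputable def diffOp (Λ : MvPolynomial (Fin n) ℂ) :
    Module.End ℂ (MvPolynomial (Fin n) ℂ) :=
  ∑ μ ∈ Λ.support, Λ.coeff μ •
    (List.ofFn fun i => ((pderiv i).toLinearMap) ^ (μ i)).prod

/-- The exponent vector viewed as a point of `ℝ^n`. -/
def expPt (α : Fin n →₀ ℕ) : Fin n → ℝ := fun i => (α i : ℝ)

/-- The polytope of a polynomial: the convex hull of its exponent support. -/
noncomputable def polyOf (P : MvPolynomial (Fin n) ℂ) : Set (Fin n → ℝ) :=
  convexHull ℝ (expPt '' (P.support : Set (Fin n →₀ ℕ)))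

namespace VanishAux
open Pointwise

variable {n : ℕ}

/-- weight of an exponent vector w.r.t. a real covector `c`. -/
noncomputable def wt (c : Fin n → ℝ) (γ : Fin n →₀ ℕ) : ℝ := ∑ i, c i * (γ i : ℝ)

lemma wt_add (c : Fin n → ℝ) (α β : Fin n →₀ ℕ) : wt c (α + β) = wt c α + wt c β := by
  simp [wt, mul_add, Finset.sum_add_distrib]

lemma wt_zero (c : Fin n → ℝ) : wt c 0 = 0 := by simp [wt]

lemma wt_nonneg {c : Fin n → ℝ} (hc : ∀ i, 0 ≤ c i) (γ : Fin n →₀ ℕ) : 0 ≤ wt c γ :=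
  Finset.sum_nonneg fun i _ => mul_nonneg (hc i) (by positivity)

lemma wt_single (c : Fin n → ℝ) (i : Fin n) : wt c (Finsupp.single i 1) = c i := by
  rw [wt, Finset.sum_eq_single i] <;> simp +contextual [Finsupp.single_apply, eq_comm]

/-- `T` lowers all `wt`-weights in the support by at least `r`. -/
def Dec (c : Fin n → ℝ) (T : Module.End ℂ (MvPolynomial (Fin n) ℂ)) (r : ℝ) : Prop :=
  ∀ (Q : MvPolynomial (Fin n) ℂ) (t : ℝ), (∀ γ ∈ Q.support, wt c γ ≤ t) →
    ∀ γ ∈ (T Q).support, wt c γ ≤ t - r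

lemma dec_one (c : Fin n → ℝ) : Dec c 1 0 := by
  intro Q t h γ hγ; simpa using h γ hγ

lemma dec_zero (c : Fin n → ℝ) (r : ℝ) : Dec c 0 r := by
  intro Q t h γ hγ; simp at hγ

lemma dec_mono {c : Fin n → ℝ} {T r} (h : Dec c T r) {r'} (hr : r' ≤ r) : Dec c T r' :=
  fun Q t ht γ hγ => le_trans (h Q t ht γ hγ) (by linarith)

lemma dec_mul {c : Fin n → ℝ} {T S r s} (hT : Dec c T r) (hS : Dec c S s) :
    Dec c (T * S) (r + s) := by
  intro Q t ht γ hγ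
  have := hT (S Q) (t - s) (hS Q t ht) γ hγ
  linarith

lemma dec_smul {c : Fin n → ℝ} {T r} (hT : Dec c T r) (a : ℂ) : Dec c (a • T) r := by
  intro Q t ht γ hγ
  have h2 : γ ∈ (a • T Q).support := by
    simpa [LinearMap.smul_apply] using hγ
  exact hT Q t ht γ (MvPolynomial.support_smul h2)

lemma dec_add {c : Fin n → ℝ} {T S r} (hT : Dec c T r) (hS : Dec c S r) :
    Dec c (T + S) r := by
  intro Q t ht γ hγ
  rcases Finset.mem_union.1 (MvPolynomial.support_add (by simpa using hγ)) with h | h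
  · exact hT Q t ht γ h
  · exact hS Q t ht γ h

lemma dec_sum {c : Fin n → ℝ} {α : Type*} (s : Finset α)
    (f : α → Module.End ℂ (MvPolynomial (Fin n) ℂ)) {r : ℝ}
    (h : ∀ a ∈ s, Dec c (f a) r) : Dec c (∑ a ∈ s, f a) r := by
  classical
  induction s using Finset.induction_on with
  | empty => simpa using dec_zero c r
  | insert _ _ hnot ih =>
    rw [Finset.sum_insert hnot]
    exact dec_add (h _ (Finset.mem_insert_self _ _))
      (ih fun a ha => h a (Finset.mem_insert_of_mem ha))

lemma dec_pow {c : Fin n → ℝ} {T r} (hT : Dec c T r) (k : ℕ) : Dec c (T ^ k) (k * r) := by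
  induction k with
  | zero => simpa using dec_one c
  | succ k ih =>
    rw [pow_succ]
    have := dec_mul ih hT
    convert this using 1
    push_cast; ring


lemma support_pderiv_subset (i : Fin n) (Q : MvPolynomial (Fin n) ℂ) :
    ∀ γ ∈ (pderiv i Q).support, ∃ δ ∈ Q.support, δ i ≠ 0 ∧ γ = δ - Finsupp.single i 1 := by
  classical
  intro γ hγ
  conv at hγ => rw [Q.as_sum, map_sum]
  obtain ⟨δ, hδ, hγ'⟩ := Finset.mem_biUnion.1 (MvPolynomial.support_sum hγ)
  rw [pderiv_monomial] at hγ'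
  rw [MvPolynomial.support_monomial] at hγ'
  by_cases h : Q.coeff δ * (δ i : ℂ) = 0
  · simp [h] at hγ'
  · simp [h] at hγ'
    refine ⟨δ, hδ, ?_, hγ'⟩
    intro h0
    simp [h0] at h
  
lemma dec_pderiv {c : Fin n → ℝ} (hc : ∀ i, 0 ≤ c i) (i : Fin n) :
    Dec c ((pderiv i).toLinearMap : Module.End ℂ (MvPolynomial (Fin n) ℂ)) (c i) := by
  intro Q t ht γ hγ
  obtain ⟨δ, hδ, hδi, rfl⟩ := support_pderiv_subset i Q γ hγ
  have hre : (δ - Finsupp.single i 1) + Finsupp.single i 1 = δ := by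
    ext j
    by_cases h : j = i
    · subst h; simp [Finsupp.single_apply]; omega
    · simp [Finsupp.single_apply, Ne.symm h]
  have := wt_add c (δ - Finsupp.single i 1) (Finsupp.single i 1)
  rw [hre, wt_single] at this
  have h2 := ht δ hδ
  linarith

lemma dec_ofFn {m : ℕ} (c : Fin n → ℝ) (f : Fin m → Module.End ℂ (MvPolynomial (Fin n) ℂ))
    (r : Fin m → ℝ) (h : ∀ i, Dec c (f i) (r i)) :
    Dec c (List.ofFn f).prod (∑ i, r i) := by
  induction m with
  | zero => simpa using dec_one c
  | succ m ih =>
    rw [List.ofFn_succ, List.prod_cons, Fin.sum_univ_succ]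
    exact dec_mul (h 0) (ih _ _ fun i => h i.succ)

lemma dec_diffOp {c : Fin n → ℝ} (hc : ∀ i, 0 ≤ c i) (Λ : MvPolynomial (Fin n) ℂ)
    {r : ℝ} (hr : ∀ μ ∈ Λ.support, r ≤ wt c μ) : Dec c (diffOp Λ) r := by
  refine dec_sum _ _ fun μ hμ => dec_smul (dec_mono ?_ (hr μ hμ)) _
  have := dec_ofFn c (fun i => ((pderiv i).toLinearMap) ^ (μ i))
    (fun i => (μ i : ℝ) * c i) (fun i => dec_pow (dec_pderiv hc i) (μ i))
  convert this using 1
  simp [wt, mul_comm]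


lemma wt_eq_clm (f : (Fin n → ℝ) →L[ℝ] ℝ) (γ : Fin n →₀ ℕ) :
    f (expPt γ) = wt (fun i => f (Pi.single i 1)) γ := by
  rw [show f (expPt γ) = f.toLinearMap (expPt γ) from rfl,
    LinearMap.pi_apply_eq_sum_univ]
  refine Finset.sum_congr rfl fun i _ => ?_
  have h1 : (fun j => if i = j then (1:ℝ) else 0) = Pi.single i 1 := by
    ext j
    by_cases h : i = j <;> simp [h, Pi.single_apply, eq_comm]
  rw [h1]
  simp [expPt, wt, mul_comm]

lemma exists_sep (P Λ : MvPolynomial (Fin n) ℂ)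
    (hdisj : {w : Fin n → ℝ | ∃ u ∈ polyOf P, ∃ v ∈ polyOf Λ, w = u - v} ∩
      {x | ∀ i, 0 ≤ x i} = ∅) :
    ∃ c : Fin n → ℝ, (∀ i, 0 ≤ c i) ∧
      ∀ u ∈ P.support, ∀ v ∈ Λ.support, wt c u < wt c v := by
  set s : Set (Fin n → ℝ) :=
    {w | ∃ u ∈ polyOf P, ∃ v ∈ polyOf Λ, w = u - v} with hs
  have hseq : s = polyOf P - polyOf Λ := by
    ext w
    simp only [hs, Set.mem_setOf_eq, Set.mem_sub]
    constructor
    · rintro ⟨u, hu, v, hv, rfl⟩; exact ⟨u, hu, v, hv, rfl⟩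
    · rintro ⟨u, hu, v, hv, rfl⟩; exact ⟨u, hu, v, hv, rfl⟩
  have hcpP : IsCompact (polyOf P) :=
    (Set.Finite.image _ (Finset.finite_toSet _)).isCompact_convexHull (𝕜 := ℝ)
  have hcpΛ : IsCompact (polyOf Λ) :=
    (Set.Finite.image _ (Finset.finite_toSet _)).isCompact_convexHull (𝕜 := ℝ)
  have hscomp : IsCompact s := by
    have him : polyOf P - polyOf Λ = (fun p : (Fin n → ℝ) × (Fin n → ℝ) => p.1 - p.2) ''
      (polyOf P ×ˢ polyOf Λ) := by
      rw [Set.image_prod]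
      exact (Set.image2_sub).symm
    rw [hseq, him]
    exact (hcpP.prod hcpΛ).image (continuous_fst.sub continuous_snd)
  have hsconv : Convex ℝ s := by
    rw [hseq]; exact (convex_convexHull ℝ _).sub (convex_convexHull ℝ _)
  have htclosed : IsClosed {x : Fin n → ℝ | ∀ i, 0 ≤ x i} := by
    have : {x : Fin n → ℝ | ∀ i, 0 ≤ x i} = ⋂ i, {x | 0 ≤ x i} := by
      ext x; simp
    rw [this]
    exact isClosed_iInter fun i => isClosed_le continuous_const (continuous_apply i)
  have htconv : Convex ℝ {x : Fin n → ℝ | ∀ i, 0 ≤ x i} := by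
    intro x hx y hy a b ha hb hab i
    have := hx i; have := hy i
    simp only [Pi.add_apply, Pi.smul_apply, smul_eq_mul]
    positivity
  obtain ⟨f, a, b, hfa, hab, hfb⟩ := geometric_hahn_banach_compact_closed hsconv hscomp
    htconv htclosed (Set.disjoint_iff_inter_eq_empty.mpr hdisj)
  have hb0 : b < 0 := by
    have := hfb 0 (fun i => le_refl 0)
    simpa using this
  set c : Fin n → ℝ := fun i => f (Pi.single i 1) with hc
  have hcnn : ∀ i, 0 ≤ c i := by
    intro i
    by_contra hlt
    push_neg at hlt
    have hx : ((b / c i) • (Pi.single i 1 : Fin n → ℝ)) ∈ {x : Fin n → ℝ | ∀ i, 0 ≤ x i} := by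
      intro j
      have hpos : 0 < b / c i := div_pos_of_neg_of_neg hb0 hlt
      have : (0:ℝ) ≤ (Pi.single i 1 : Fin n → ℝ) j := by
        rcases eq_or_ne j i with rfl | h
        · simp
        · simp [Pi.single_apply, h]
      simp only [Pi.smul_apply, smul_eq_mul]
      positivity
    have := hfb _ hx
    rw [map_smul, smul_eq_mul] at this
    rw [div_mul_cancel₀ b (ne_of_lt hlt)] at this
    exact lt_irrefl b this
  refine ⟨c, hcnn, fun u hu v hv => ?_⟩
  have heu : expPt u ∈ polyOf P :=
    subset_convexHull ℝ _ (Set.mem_image_of_mem _ (by exact_mod_cast hu))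
  have hev : expPt v ∈ polyOf Λ :=
    subset_convexHull ℝ _ (Set.mem_image_of_mem _ (by exact_mod_cast hv))
  have hw : expPt u - expPt v ∈ s := ⟨expPt u, heu, expPt v, hev, rfl⟩
  have := hfa _ hw
  rw [map_sub] at this
  have h1 := wt_eq_clm f u
  have h2 := wt_eq_clm f v
  rw [← hc] at h1 h2
  rw [h1, h2] at this
  linarith


lemma wt_support_pow {c : Fin n → ℝ} (P : MvPolynomial (Fin n) ℂ) {A : ℝ}
    (hA : ∀ γ ∈ P.support, wt c γ ≤ A) :
    ∀ m : ℕ, ∀ γ ∈ (P ^ m).support, wt c γ ≤ m * A := by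
  intro m
  induction m with
  | zero =>
    intro γ hγ
    have : γ = 0 := by
      by_contra h
      simp [MvPolynomial.mem_support_iff, MvPolynomial.coeff_one, h] at hγ
    simp [this, wt_zero]
  | succ m ih =>
    intro γ hγ
    rw [pow_succ] at hγ
    obtain ⟨α, hα, β, hβ, rfl⟩ := Finset.mem_add.1 (MvPolynomial.support_mul _ _ hγ)
    have := ih α hα
    have := hA β hβ
    rw [wt_add]
    push_cast
    nlinarith

end VanishAux

/-- If `(Poly(P) - Poly(Λ)) ∩ ℝ_{≥0}^n = ∅` then `Λ^m(P^m) = 0` for all `m ≥ 1`, and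
for each `g` one has `Λ^m(P^m g) = 0` for all large `m`. -/
theorem vanishing_of_polytope_condition (P Λ : MvPolynomial (Fin n) ℂ)
    (hdisj : {w : Fin n → ℝ | ∃ u ∈ polyOf P, ∃ v ∈ polyOf Λ, w = u - v} ∩
      {x | ∀ i, 0 ≤ x i} = ∅) :
    (∀ m : ℕ, 1 ≤ m → (diffOp Λ ^ m) (P ^ m) = 0) ∧
    (∀ g : MvPolynomial (Fin n) ℂ, ∃ N : ℕ, ∀ m : ℕ, N ≤ m →
      (diffOp Λ ^ m) (P ^ m * g) = 0) := by
  classical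
  open VanishAux in
  by_cases hP : P = 0
  · subst hP
    constructor
    · intro m hm
      rw [zero_pow (by omega), map_zero]
    · exact fun g => ⟨1, fun m hm => by rw [zero_pow (by omega), zero_mul, map_zero]⟩
  by_cases hΛ : Λ = 0
  · have hd0 : diffOp Λ = 0 := by
      simp [diffOp, hΛ]
    constructor
    · intro m hm
      rw [hd0, zero_pow (by omega)]
      rfl
    · exact fun g => ⟨1, fun m hm => by rw [hd0, zero_pow (by omega)]; rfl⟩
  obtain ⟨c, hc, hsep⟩ := VanishAux.exists_sep P Λ hdisj
  have hPs : P.support.Nonempty := MvPolynomial.support_nonempty.2 hP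
  have hΛs : Λ.support.Nonempty := MvPolynomial.support_nonempty.2 hΛ
  set A : ℝ := P.support.sup' hPs (VanishAux.wt c) with hA
  set L : ℝ := Λ.support.inf' hΛs (VanishAux.wt c) with hL
  have hAL : A < L := by
    rw [hA, Finset.sup'_lt_iff]
    intro u hu
    rw [hL, Finset.lt_inf'_iff]
    exact fun v hv => hsep u hu v hv
  have hdec : VanishAux.Dec c (diffOp Λ) L :=
    VanishAux.dec_diffOp hc Λ fun μ hμ => Finset.inf'_le _ hμ
  have hPm : ∀ m : ℕ, ∀ γ ∈ (P ^ m).support, VanishAux.wt c γ ≤ m * A :=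
    VanishAux.wt_support_pow P fun γ hγ => Finset.le_sup' _ hγ
  constructor
  · intro m hm
    rw [← MvPolynomial.support_eq_empty, Finset.eq_empty_iff_forall_notMem]
    intro γ hγ
    have h1 := VanishAux.dec_pow hdec m (P ^ m) (m * A) (hPm m) γ hγ
    have h2 := VanishAux.wt_nonneg hc γ
    have hm' : (1:ℝ) ≤ (m:ℝ) := by exact_mod_cast hm
    nlinarith
  · intro g
    by_cases hg : g = 0
    · exact ⟨0, fun m hm => by rw [hg, mul_zero, map_zero]⟩
    have hgs : g.support.Nonempty := MvPolynomial.support_nonempty.2 hg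
    set B : ℝ := g.support.sup' hgs (VanishAux.wt c) with hB
    set ε : ℝ := L - A with hε
    have hεpos : 0 < ε := by rw [hε]; linarith
    refine ⟨⌈B / ε⌉₊ + 1, fun m hm => ?_⟩
    have hBm : B < m * ε := by
      have h1 : B / ε ≤ (⌈B / ε⌉₊ : ℝ) := Nat.le_ceil _
      have h2 : ((⌈B / ε⌉₊ + 1 : ℕ) : ℝ) ≤ (m : ℝ) := by exact_mod_cast hm
      have h3 : B / ε < (m : ℝ) := by push_cast at h2 ⊢; linarith
      calc B = (B / ε) * ε := by field_simp
        _ < m * ε := by exact mul_lt_mul_of_pos_right h3 hεpos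
    rw [← MvPolynomial.support_eq_empty, Finset.eq_empty_iff_forall_notMem]
    intro γ hγ
    have hsupp : ∀ δ ∈ (P ^ m * g).support, VanishAux.wt c δ ≤ m * A + B := by
      intro δ hδ
      obtain ⟨α, hα, β, hβ, rfl⟩ := Finset.mem_add.1 (MvPolynomial.support_mul _ _ hδ)
      have := hPm m α hα
      have := Finset.le_sup' (VanishAux.wt c) hβ
      rw [VanishAux.wt_add]
      rw [← hB] at *
      linarith
    have h1 := VanishAux.dec_pow hdec m (P ^ m * g) (m * A + B) hsupp γ hγ
    have h2 := VanishAux.wt_nonneg hc γ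
    have : VanishAux.wt c γ ≤ B - m * ε := by rw [hε]; push_cast at h1 ⊢; linarith
    linarith
end

section
/- Let Λ = ∂^α + ∂^β with α, β ∈ ℕ^n and |α| ≠ |β| (different total degrees), and let P ∈ ℂ[z₁,…,z_n] be homogeneous with Λ^m(P^m) = 0 for all m ≥ 1. Then for every fixed m ≥ 1, ∂^{kα+ℓβ}(P^m) = 0 for all k, ℓ ∈ ℕ with k + ℓ = m. -/
open MvPolynomial

/-- The monomial differential operator `∂^α = ∂₁^{α₁}⋯∂ₙ^{αₙ}` on `ℂ[z₁,…,zₙ]`. -/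
noncomputable def monOp {n : ℕ} (α : Fin n → ℕ) :
    Module.End ℂ (MvPolynomial (Fin n) ℂ) :=
  (List.ofFn fun i => ((pderiv i).toLinearMap) ^ (α i)).prod

section Aux

variable {n : ℕ}

/-- Partial derivatives commute. -/
lemma pderiv_comm' (i j : Fin n) (f : MvPolynomial (Fin n) ℂ) :
    pderiv i (pderiv j f) = pderiv j (pderiv i f) := by
  induction f using MvPolynomial.induction_on' with
  | add p q hp hq => simp [map_add, hp, hq]
  | monomial s a =>
    rcases eq_or_ne i j with rfl | hij
    · rfl
    · simp only [pderiv_monomial]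
      have h1 : (s - Finsupp.single j 1 : Fin n →₀ ℕ) i = s i := by
        simp [Finsupp.sub_apply, Finsupp.single_apply, Ne.symm hij]
      have h2 : (s - Finsupp.single i 1 : Fin n →₀ ℕ) j = s j := by
        simp [Finsupp.sub_apply, Finsupp.single_apply, hij]
      have h3 : s - Finsupp.single j 1 - Finsupp.single i 1
          = s - Finsupp.single i 1 - Finsupp.single j 1 := tsub_right_comm
      rw [h1, h2, h3]
      ring_nf

lemma commute_pderiv (i j : Fin n) :
    Commute ((pderiv i).toLinearMap : Module.End ℂ (MvPolynomial (Fin n) ℂ))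
      (pderiv j).toLinearMap := by
  apply LinearMap.ext
  intro f
  exact pderiv_comm' i j f

/-- Product of two ordered products of pairwise commuting families. -/
lemma ofFn_prod_mul {M : Type*} [Monoid M] :
    ∀ {m : ℕ} (f g : Fin m → M), (∀ i j, Commute (f i) (g j)) →
      (List.ofFn f).prod * (List.ofFn g).prod = (List.ofFn fun i => f i * g i).prod := by
  intro m
  induction m with
  | zero => intro f g _; simp
  | succ m ih =>
    intro f g hc
    rw [List.ofFn_succ, List.ofFn_succ, List.ofFn_succ, List.prod_cons, List.prod_cons,
      List.prod_cons]
    have hcomm : Commute (g 0) (List.ofFn fun i : Fin m => f i.succ).prod := by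
      apply Commute.list_prod_right
      intro x hx
      rw [List.mem_ofFn] at hx
      obtain ⟨i, rfl⟩ := hx
      exact (hc i.succ 0).symm
    rw [hcomm.symm.mul_mul_mul_comm, ih _ _ fun i j => hc i.succ j.succ]

lemma monOp_mul (α β : Fin n → ℕ) :
    monOp α * monOp β = monOp (fun i => α i + β i) := by
  unfold monOp
  rw [ofFn_prod_mul _ _ fun i j => (commute_pderiv i j).pow_pow _ _]
  simp only [pow_add]

lemma monOp_zero : monOp (fun _ : Fin n => 0) = 1 := by
  unfold monOp
  apply List.prod_eq_one
  intro x hx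
  rw [List.mem_ofFn] at hx
  obtain ⟨i, rfl⟩ := hx
  exact pow_zero _

lemma monOp_pow (α : Fin n → ℕ) (k : ℕ) :
    monOp α ^ k = monOp (fun i => k * α i) := by
  induction k with
  | zero => simpa using monOp_zero.symm
  | succ k ih =>
    rw [pow_succ, ih, monOp_mul]
    congr 1
    funext i
    ring

/-- An operator `f` lowers degrees by `w`. -/
def Lowers (f : Module.End ℂ (MvPolynomial (Fin n) ℂ)) (w : ℕ) : Prop :=
  ∀ d (q : MvPolynomial (Fin n) ℂ), q.IsHomogeneous d →
    (f q).IsHomogeneous (d - w) ∧ (d < w → f q = 0)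

lemma lowers_one : Lowers (1 : Module.End ℂ (MvPolynomial (Fin n) ℂ)) 0 := by
  intro d q hq
  exact ⟨by simpa using hq, fun h => absurd h (Nat.not_lt_zero d)⟩

lemma lowers_mul {f g : Module.End ℂ (MvPolynomial (Fin n) ℂ)} {w v : ℕ}
    (hf : Lowers f w) (hg : Lowers g v) : Lowers (f * g) (w + v) := by
  intro d q hq
  have hgq := hg d q hq
  have hfgq := hf (d - v) (g q) hgq.1
  constructor
  · have : d - v - w = d - (w + v) := by omega
    rw [Module.End.mul_apply, ← this]
    exact hfgq.1
  · intro hd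
    rw [Module.End.mul_apply]
    rcases lt_or_ge d v with hv | hv
    · rw [hgq.2 hv, map_zero]
    · exact hfgq.2 (by omega)

lemma lowers_pderiv (i : Fin n) :
    Lowers ((pderiv i).toLinearMap : Module.End ℂ (MvPolynomial (Fin n) ℂ)) 1 := by
  intro d q hq
  constructor
  · -- pderiv of a homogeneous polynomial of degree d is homogeneous of degree d - 1
    conv_lhs => rw [q.as_sum]
    rw [map_sum]
    apply IsHomogeneous.sum
    intro s hs
    rw [Derivation.coeFn_coe, pderiv_monomial]
    rcases Nat.eq_zero_or_pos (s i) with h0 | hpos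
    · rw [h0]; simpa using isHomogeneous_zero _ _ _
    · apply isHomogeneous_monomial
      have hsd : s.degree = d := by
        have := hq (MvPolynomial.mem_support_iff.mp hs)
        rwa [Finsupp.degree_eq_weight_one]
      have heq : (s - Finsupp.single i 1) + Finsupp.single i 1 = s := by
        ext j
        rcases eq_or_ne j i with rfl | hj
        · simp only [Finsupp.add_apply, Finsupp.tsub_apply, Finsupp.single_apply, if_pos rfl, if_true]
          omega
        · simp [Finsupp.add_apply, Finsupp.tsub_apply, Finsupp.single_apply, Ne.symm hj]
      have hdeg : (s - Finsupp.single i 1).degree + 1 = d := by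
        have h4 := congrArg Finsupp.degree heq
        rw [hsd] at h4
        rw [← h4]
        simp only [Finsupp.degree_eq_weight_one, map_add]
        have : (Finsupp.weight 1) (Finsupp.single i 1 : Fin n →₀ ℕ) = 1 := by
          simp [Finsupp.weight_apply, Finsupp.sum_single_index]
        rw [Pi.one_def] at this
        omega
      omega
  · intro hd
    interval_cases d
    have hzero : ∀ s ∈ q.support, ∀ x, s x = 0 :=
      (totalDegree_eq_zero_iff _ q).mp ((totalDegree_zero_iff_isHomogeneous _).mpr hq)
    conv_lhs => rw [q.as_sum]
    rw [map_sum]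
    apply Finset.sum_eq_zero
    intro s hs
    rw [Derivation.coeFn_coe, pderiv_monomial, hzero s hs i]
    simp

lemma lowers_pow {f : Module.End ℂ (MvPolynomial (Fin n) ℂ)} {w : ℕ}
    (hf : Lowers f w) (k : ℕ) : Lowers (f ^ k) (k * w) := by
  induction k with
  | zero => simpa using lowers_one
  | succ k ih =>
    rw [pow_succ]
    have hw : (k + 1) * w = k * w + w := by ring
    rw [hw]
    exact lowers_mul ih hf

lemma lowers_ofFn {m : ℕ} (f : Fin m → Module.End ℂ (MvPolynomial (Fin n) ℂ))
    (w : Fin m → ℕ) (h : ∀ i, Lowers (f i) (w i)) :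
    Lowers (List.ofFn f).prod (∑ i, w i) := by
  induction m with
  | zero => simpa using lowers_one
  | succ m ih =>
    rw [List.ofFn_succ, List.prod_cons, Fin.sum_univ_succ]
    exact lowers_mul (h 0) (ih _ _ fun i => h i.succ)

lemma lowers_monOp (γ : Fin n → ℕ) : Lowers (monOp γ) (∑ i, γ i) := by
  have := lowers_ofFn (fun i => ((pderiv i).toLinearMap :
      Module.End ℂ (MvPolynomial (Fin n) ℂ)) ^ (γ i)) (fun i => γ i * 1)
    (fun i => lowers_pow (lowers_pderiv i) (γ i))
  simpa [monOp] using this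

/-- Injectivity of `j ↦ j*a + (m-j)*b` for `a ≠ b`. -/
lemma t_inj {a b m j k : ℕ} (hab : a ≠ b) (hj : j ≤ m) (hk : k ≤ m)
    (heq : j * a + (m - j) * b = k * a + (m - k) * b) : j = k := by
  zify [hj, hk] at heq
  have h2 : ((j : ℤ) - k) * ((a : ℤ) - b) = 0 := by linear_combination heq
  rcases mul_eq_zero.mp h2 with h | h
  · have := sub_eq_zero.mp h
    exact_mod_cast this
  · exfalso
    exact hab (by exact_mod_cast sub_eq_zero.mp h)

end Aux

/-- For `Λ = ∂^α + ∂^β` with `|α| ≠ |β|` and `P` homogeneous with `Λ^m(P^m) = 0` for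
all `m ≥ 1`, each individual term `∂^{kα+ℓβ}(P^m)` with `k + ℓ = m` vanishes. -/
theorem terms_vanish_individually {n : ℕ} (α β : Fin n → ℕ)
    (hdeg : (∑ i, α i) ≠ (∑ i, β i))
    (P : MvPolynomial (Fin n) ℂ) (d : ℕ) (hP : P.IsHomogeneous d)
    (h : ∀ m : ℕ, 1 ≤ m → ((monOp α + monOp β) ^ m) (P ^ m) = 0) :
    ∀ m : ℕ, 1 ≤ m → ∀ k ℓ : ℕ, k + ℓ = m →
      monOp (fun i => k * α i + ℓ * β i) (P ^ m) = 0 := by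
  intro m hm k ℓ hkl
  set a := ∑ i, α i with ha
  set b := ∑ i, β i with hb
  have hPm : (P ^ m).IsHomogeneous (d * m) := hP.pow m
  -- the individual terms
  set q : ℕ → MvPolynomial (Fin n) ℂ :=
    fun j => monOp (fun i => j * α i + (m - j) * β i) (P ^ m) with hqdef
  -- weight of the j-th term
  set t : ℕ → ℕ := fun j => j * a + (m - j) * b with htdef
  have hsum : ∀ j, (∑ i, (j * α i + (m - j) * β i)) = t j := by
    intro j
    rw [Finset.sum_add_distrib, ← Finset.mul_sum, ← Finset.mul_sum]
  have hlow : ∀ j, ((q j).IsHomogeneous (d * m - t j)) ∧ (d * m < t j → q j = 0) := by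
    intro j
    have := lowers_monOp (n := n) (fun i => j * α i + (m - j) * β i) (d * m) (P ^ m) hPm
    rwa [hsum j] at this
  -- goal is q k = 0
  have hℓ : ℓ = m - k := by omega
  have hkm : k ≤ m := by omega
  subst hℓ
  show q k = 0
  rcases lt_or_ge (d * m) (t k) with hlt | hle
  · exact (hlow k).2 hlt
  -- binomial expansion
  have hcomm : Commute (monOp α) (monOp β) := by
    unfold Commute SemiconjBy
    rw [monOp_mul, monOp_mul]
    congr 1
    funext i
    ring
  have hbin : ∀ j, monOp α ^ j * monOp β ^ (m - j)
      = monOp (fun i => j * α i + (m - j) * β i) := by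
    intro j
    rw [monOp_pow, monOp_pow, monOp_mul]
  have hzero : (∑ j ∈ Finset.range (m + 1), (m.choose j) • q j) = 0 := by
    have h0 := h m hm
    rw [hcomm.add_pow] at h0
    rw [← h0]
    rw [LinearMap.sum_apply]
    apply Finset.sum_congr rfl
    intro j _
    rw [hbin j]
    show (m.choose j) • q j = _
    rw [Module.End.mul_apply, Module.End.natCast_apply]
    rw [map_nsmul]
  -- apply the homogeneous component of degree d*m - t k
  set e := d * m - t k with he
  have hcomp : ∀ j, j ∈ Finset.range (m + 1) → j ≠ k →
      (m.choose j) • homogeneousComponent e (q j) = 0 := by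
    intro j hjr hjk
    have hjm : j ≤ m := by simp at hjr; omega
    rcases lt_or_ge (d * m) (t j) with hlt | hle'
    · rw [(hlow j).2 hlt, map_zero, smul_zero]
    · have hqj : (q j).IsHomogeneous (d * m - t j) := (hlow j).1
      have hne : e ≠ d * m - t j := by
        intro habs
        apply hjk
        refine t_inj hdeg hjm hkm ?_
        have : t j = t k := by omega
        exact this
      rw [homogeneousComponent_of_mem ((mem_homogeneousSubmodule _ _).mpr hqj),
        if_neg hne, smul_zero]
  have hmain : (m.choose k) • q k = 0 := by
    have := congrArg (homogeneousComponent e) hzero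
    rw [map_sum, map_zero] at this
    rw [← this]
    symm
    rw [Finset.sum_eq_single k]
    · rw [map_nsmul,
        homogeneousComponent_of_mem ((mem_homogeneousSubmodule _ _).mpr (hlow k).1),
        if_pos rfl]
    · intro j hjr hjk
      rw [map_nsmul]
      exact hcomp j hjr hjk
    · intro hk
      exact absurd (Finset.mem_range.mpr (by omega)) hk
  have hchoose : (m.choose k : ℂ) ≠ 0 := by
    exact_mod_cast Nat.choose_pos hkm |>.ne'
  have : (m.choose k : ℂ) • q k = 0 := by
    rw [← Nat.cast_smul_eq_nsmul ℂ] at hmain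
    exact hmain
  rcases smul_eq_zero.mp this with h' | h'
  · exact absurd h' hchoose
  · exact h'
end
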